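/- arXiv:2603.19106 — 5 statements merged into one kernel-verified Lean document; each statement's English description precedes it below -/
import Mathlib

section
/- Let p : ℕ → ℝ be nonnegative, let R ≥ 0, and suppose |p(k+1) - p(k)| ≤ R for every k. Let I = {a, ..., b} and J = {b+1, ..., c} be two nonempty blocks of consecutive indices, where J immediately follows I. Then (1/|J|) · Σ_{k∈J} p(k) − Σ_{k∈I} p(k) ≤ R + R·(|J|−1)/2, where |I| and |J| denote the cardinalities of the blocks. -/
/-- feasibility of the aggregated upward ramp constraint.  For a nonnegative
sequence `p` with ramp limit `R` (`|p (k+1) - p k| ≤ R` for all `k`), and two consecutive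
nonempty blocks `I = {a, ..., b}` and `J = {b+1, ..., c}`, the cluster average of `p` over `J`
minus the sum of `p` over `I` is at most `R + R*(|J|-1)/2`. -/
theorem agg_upward_ramp (p : ℕ → ℝ) (hp : ∀ k, 0 ≤ p k) (R : ℝ) (hR : 0 ≤ R)
    (hramp : ∀ k, |p (k + 1) - p k| ≤ R) (a b c : ℕ) (hab : a ≤ b) (hbc : b + 1 ≤ c) :
    (1 / ((Finset.Icc (b + 1) c).card : ℝ)) * ∑ k ∈ Finset.Icc (b + 1) c, p k
        - ∑ k ∈ Finset.Icc a b, p k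
      ≤ R + R * (((Finset.Icc (b + 1) c).card : ℝ) - 1) / 2 := by
  have hkey : ∀ j : ℕ, p (b + j) ≤ p b + R * j := by
    intro j
    induction j with
    | zero => simp
    | succ j ih =>
      have h := (abs_le.mp (hramp (b + j))).2
      have he : b + (j + 1) = (b + j) + 1 := by omega
      rw [he]
      push_cast
      linarith
  set n := c - b with hn
  have hn1 : 1 ≤ n := by omega
  have hcard : (Finset.Icc (b + 1) c).card = n := by
    rw [Nat.card_Icc]; omega
  have hgauss : ∀ m : ℕ, (∑ j ∈ Finset.range m, (j : ℝ)) = m * (m - 1) / 2 := by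
    intro m
    induction m with
    | zero => simp
    | succ m ih =>
      rw [Finset.sum_range_succ, ih]
      push_cast
      ring
  have hsum : (∑ k ∈ Finset.Icc (b + 1) c, p k)
      ≤ n * p b + R * (n * ((n : ℝ) - 1) / 2 + n) := by
    rw [show Finset.Icc (b + 1) c = Finset.Ico (b + 1) (c + 1) from (Finset.Ico_add_one_right_eq_Icc _ _).symm,
      Finset.sum_Ico_eq_sum_range, show c + 1 - (b + 1) = n by omega]
    have hle : ∀ j ∈ Finset.range n, p (b + 1 + j) ≤ p b + R * ((j : ℝ) + 1) := by
      intro j _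
      have := hkey (j + 1)
      rw [show b + (j + 1) = b + 1 + j by omega] at this
      push_cast at this
      linarith
    calc (∑ j ∈ Finset.range n, p (b + 1 + j))
        ≤ ∑ j ∈ Finset.range n, (p b + R * ((j : ℝ) + 1)) := Finset.sum_le_sum hle
      _ = n * p b + R * ((∑ j ∈ Finset.range n, (j : ℝ)) + n) := by
          rw [Finset.sum_add_distrib, ← Finset.mul_sum, Finset.sum_add_distrib]
          simp [Finset.mul_sum]
      _ = n * p b + R * (n * ((n : ℝ) - 1) / 2 + n) := by rw [hgauss]
  have hpb : p b ≤ ∑ k ∈ Finset.Icc a b, p k := by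
    apply Finset.single_le_sum (fun k _ => hp k)
    simp [Finset.mem_Icc, hab]
  rw [hcard]
  have hn0 : (0 : ℝ) < n := by exact_mod_cast hn1
  have h1 : (1 / (n : ℝ)) * ∑ k ∈ Finset.Icc (b + 1) c, p k
      ≤ (1 / (n : ℝ)) * (n * p b + R * (n * ((n : ℝ) - 1) / 2 + n)) :=
    mul_le_mul_of_nonneg_left hsum (by positivity)
  have h2 : (1 / (n : ℝ)) * (n * p b + R * (n * ((n : ℝ) - 1) / 2 + n))
      = p b + R + R * ((n : ℝ) - 1) / 2 := by
    field_simp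
    ring
  linarith
end

section
/- Let p : ℕ → ℝ be nonnegative, let R ≥ 0, and suppose |p(k+1) - p(k)| ≤ R for every k. Let I = {a, ..., b} and J = {b+1, ..., c} be two nonempty blocks of consecutive indices, where J immediately follows I. Then (1/|I|) · Σ_{k∈I} p(k) − Σ_{k∈J} p(k) ≤ R + R·(|I|−1)/2, where |I| and |J| denote the cardinalities of the blocks. -/
/-- feasibility of the aggregated downward ramp constraint.  For a nonnegative
sequence `p` with ramp limit `R` (`|p (k+1) - p k| ≤ R` for all `k`), and two consecutive
nonempty blocks `I = {a, ..., b}` and `J = {b+1, ..., c}`, the cluster average of `p` over `I`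
minus the sum of `p` over `J` is at most `R + R*(|I|-1)/2`. -/
theorem agg_downward_ramp (p : ℕ → ℝ) (hp : ∀ k, 0 ≤ p k) (R : ℝ) (hR : 0 ≤ R)
    (hramp : ∀ k, |p (k + 1) - p k| ≤ R) (a b c : ℕ) (hab : a ≤ b) (hbc : b + 1 ≤ c) :
    (1 / ((Finset.Icc a b).card : ℝ)) * ∑ k ∈ Finset.Icc a b, p k
        - ∑ k ∈ Finset.Icc (b + 1) c, p k
      ≤ R + R * (((Finset.Icc a b).card : ℝ) - 1) / 2 := by
  have key : ∀ k m : ℕ, k ≤ m → p k ≤ p m + R * ((m : ℝ) - (k : ℝ)) := by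
    intro k m hkm
    induction m, hkm using Nat.le_induction with
    | base => simp
    | succ m hm ih =>
      have h := abs_le.mp (hramp m)
      push_cast
      push_cast at ih
      linarith [h.1]
  set n := (Finset.Icc a b).card with hn
  have hncard : n = b + 1 - a := by rw [hn, Nat.card_Icc]
  have hn1 : 1 ≤ n := by omega
  have hnpos : (0 : ℝ) < (n : ℝ) := by exact_mod_cast hn1
  have hncastR : (n : ℝ) = (b : ℝ) + 1 - (a : ℝ) := by
    have : (n : ℝ) = ((b + 1 - a : ℕ) : ℝ) := by exact_mod_cast congrArg Nat.cast hncard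
    rw [this]
    have : a ≤ b + 1 := by omega
    push_cast [this]
    ring
  -- bound the sum over I
  have hsumI : ∑ k ∈ Finset.Icc a b, p k
      ≤ ∑ k ∈ Finset.Icc a b, (p (b + 1) + R * (((b : ℝ) + 1) - (k : ℝ))) := by
    apply Finset.sum_le_sum
    intro k hk
    have hk' : k ≤ b + 1 := le_trans (Finset.mem_Icc.mp hk).2 (Nat.le_succ b)
    have := key k (b + 1) hk'
    push_cast at this ⊢
    linarith
  -- Gauss sum
  have hGauss : ∑ k ∈ Finset.Icc a b, (((b : ℝ) + 1) - (k : ℝ))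
      = (n : ℝ) * ((n : ℝ) + 1) / 2 := by
    rw [← Finset.Ico_add_one_right_eq_Icc, Finset.sum_Ico_eq_sum_range]
    have hcard : b + 1 - a = n := hncard.symm
    rw [hcard]
    have hg := Finset.sum_range_id_mul_two n
    have hgR : (∑ i ∈ Finset.range n, (i : ℝ)) * 2 = (n : ℝ) * ((n : ℝ) - 1) := by
      have h1 : (((∑ i ∈ Finset.range n, i) * 2 : ℕ) : ℝ) = ((n * (n - 1) : ℕ) : ℝ) := by
        exact_mod_cast congrArg Nat.cast hg
      rw [Nat.cast_mul, Nat.cast_mul, Nat.cast_sub hn1] at h1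
      push_cast at h1 ⊢
      linarith
    have hterm : ∀ i ∈ Finset.range n, ((b : ℝ) + 1 - ((a + i : ℕ) : ℝ)) = (n : ℝ) - (i : ℝ) := by
      intro i _
      push_cast
      linarith [hncastR]
    rw [Finset.sum_congr rfl hterm, Finset.sum_sub_distrib, Finset.sum_const,
      Finset.card_range, nsmul_eq_mul]
    linarith
  have hS : ∑ k ∈ Finset.Icc a b, (p (b + 1) + R * (((b : ℝ) + 1) - (k : ℝ)))
      = (n : ℝ) * p (b + 1) + R * ((n : ℝ) * ((n : ℝ) + 1) / 2) := by
    rw [Finset.sum_add_distrib, Finset.sum_const, ← Finset.mul_sum, ← hn, hGauss]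
    ring
  have h2 : ∑ k ∈ Finset.Icc a b, p k
      ≤ (n : ℝ) * p (b + 1) + R * ((n : ℝ) * ((n : ℝ) + 1) / 2) := hsumI.trans hS.le
  -- sum over J at least p (b+1)
  have hJ : p (b + 1) ≤ ∑ k ∈ Finset.Icc (b + 1) c, p k := by
    apply Finset.single_le_sum (fun k _ => hp k)
    rw [Finset.mem_Icc]
    omega
  have hdiv : (1 / (n : ℝ)) * ∑ k ∈ Finset.Icc a b, p k
      ≤ p (b + 1) + R * (((n : ℝ) + 1) / 2) := by
    rw [one_div, inv_mul_le_iff₀ hnpos]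
    nlinarith [h2]
  have hfinal : R * (((n : ℝ) + 1) / 2) = R + R * ((n : ℝ) - 1) / 2 := by ring
  linarith
end

section
/- Let S be a nonempty finite set of cardinality n, let α ≥ 0, let β and L be real numbers, let P̄ ≥ 0, and let p : S → ℝ satisfy 0 ≤ p(k) ≤ P̄ and α·p(k)² + β·p(k) ≤ L for every k ∈ S. Then the average p̄ := (1/n) · Σ_{k∈S} p(k) satisfies α·n·p̄² − α·(n−1)·P̄² + β·p̄ ≤ L. -/
/-- feasibility of the aggregated quadratic emission constraint at the
cluster average.  If every `p k`, `k ∈ S`, lies in `[0, P̄]` and satisfies the full-scale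
emission constraint `α*(p k)² + β*(p k) ≤ L`, then the cluster average
`p̄ = (1/n)·Σ_{k∈S} p k` (with `n = |S|`) satisfies the aggregated constraint
`α*n*p̄² - α*(n-1)*P̄² + β*p̄ ≤ L`. -/
theorem agg_emission_constraint {ι : Type*} (S : Finset ι) (hS : S.Nonempty)
    (α β L Pbar : ℝ) (hα : 0 ≤ α) (hPbar : 0 ≤ Pbar) (p : ι → ℝ)
    (hbox : ∀ k ∈ S, 0 ≤ p k ∧ p k ≤ Pbar)
    (hem : ∀ k ∈ S, α * p k ^ 2 + β * p k ≤ L) :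
    α * (S.card : ℝ) * ((1 / (S.card : ℝ)) * ∑ k ∈ S, p k) ^ 2
        - α * ((S.card : ℝ) - 1) * Pbar ^ 2
        + β * ((1 / (S.card : ℝ)) * ∑ k ∈ S, p k) ≤ L := by
  classical
  set n : ℝ := (S.card : ℝ) with hn_def
  have hcard : 0 < S.card := Finset.card_pos.mpr hS
  have hn : 0 < n := by rw [hn_def]; exact_mod_cast hcard
  set T : ℝ := ∑ k ∈ S, p k with hT_def
  -- sum of the pointwise constraints
  have hsum : (∑ k ∈ S, (α * p k ^ 2 + β * p k)) ≤ n * L := by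
    have := Finset.sum_le_card_nsmul S (fun k => α * p k ^ 2 + β * p k) L hem
    simpa [nsmul_eq_mul] using this
  have hsum' : α * (∑ k ∈ S, p k ^ 2) + β * T ≤ n * L := by
    have : (∑ k ∈ S, (α * p k ^ 2 + β * p k))
        = α * (∑ k ∈ S, p k ^ 2) + β * T := by
      rw [Finset.sum_add_distrib, ← Finset.mul_sum, ← Finset.mul_sum]
    linarith [hsum, this ▸ hsum]
  -- bound each p i * (T - p i)
  have hkey : ∀ i ∈ S, p i * (T - p i) ≤ Pbar * ((n - 1) * Pbar) := by
    intro i hi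
    have hpi := hbox i hi
    have hrest : T - p i ≤ (n - 1) * Pbar := by
      have hsplit : T = p i + ∑ k ∈ S.erase i, p k := by
        rw [hT_def, ← Finset.add_sum_erase S p hi]
      have hb : (∑ k ∈ S.erase i, p k) ≤ ((S.erase i).card : ℝ) * Pbar := by
        have := Finset.sum_le_card_nsmul (S.erase i) p Pbar
          (fun k hk => (hbox k (Finset.mem_of_mem_erase hk)).2)
        simpa [nsmul_eq_mul] using this
      have hc : ((S.erase i).card : ℝ) = n - 1 := by
        rw [Finset.card_erase_of_mem hi]
        have : (1:ℕ) ≤ S.card := hcard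
        push_cast [Nat.cast_sub this]
        ring
      rw [hsplit]
      linarith [hc ▸ hb]
    have hrest0 : 0 ≤ T - p i := by
      have hsplit : T = p i + ∑ k ∈ S.erase i, p k := by
        rw [hT_def, ← Finset.add_sum_erase S p hi]
      have h0 : 0 ≤ ∑ k ∈ S.erase i, p k :=
        Finset.sum_nonneg fun k hk => (hbox k (Finset.mem_of_mem_erase hk)).1
      linarith [hsplit]
    exact mul_le_mul hpi.2 hrest hrest0 hPbar
  -- hence T^2 ≤ Σ p² + n(n-1)P̄²
  have hT2 : T ^ 2 ≤ (∑ k ∈ S, p k ^ 2) + n * ((n - 1) * Pbar ^ 2) := by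
    have h1 : T ^ 2 = ∑ k ∈ S, p k * T := by
      rw [← Finset.sum_mul, ← hT_def]; ring
    have h2 : (∑ k ∈ S, p k * (T - p k)) ≤ n * (Pbar * ((n - 1) * Pbar)) := by
      have := Finset.sum_le_card_nsmul S (fun k => p k * (T - p k))
        (Pbar * ((n - 1) * Pbar)) hkey
      simpa [nsmul_eq_mul] using this
    have h3 : (∑ k ∈ S, p k * T)
        = (∑ k ∈ S, p k ^ 2) + ∑ k ∈ S, p k * (T - p k) := by
      rw [← Finset.sum_add_distrib]
      apply Finset.sum_congr rfl
      intro k _; ring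
    rw [h1, h3]
    nlinarith [h2]
  -- combine
  have hfinal : α * T ^ 2 + β * T ≤ n * L + α * (n * ((n - 1) * Pbar ^ 2)) := by
    nlinarith [mul_le_mul_of_nonneg_left hT2 hα]
  have heq : α * n * ((1 / n) * T) ^ 2 + β * ((1 / n) * T)
      = (α * T ^ 2 + β * T) / n := by
    field_simp
  have hdiv : (α * T ^ 2 + β * T) / n ≤ L + α * ((n - 1) * Pbar ^ 2) := by
    rw [div_le_iff₀ hn]
    nlinarith [hfinal]
  calc α * n * ((1 / n) * T) ^ 2 - α * (n - 1) * Pbar ^ 2 + β * ((1 / n) * T)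
      = (α * T ^ 2 + β * T) / n - α * ((n - 1) * Pbar ^ 2) := by
        rw [← heq]; ring
    _ ≤ L := by linarith [hdiv]
end

section
/- Let Ω, N, G be nonempty finite index sets (scenarios, storage units, thermal units), let K ≥ 1, and let {0, ..., K−1} be partitioned into R nonempty clusters K_0, ..., K_{R−1} of consecutive integers ordered so that max(K_r)+1 = min(K_{r+1}). Let Δ > 0, let π_{ω,k} be real prices, let C^th_g, C^ns, C^c_n, C^d_n be real cost coefficients, let C^ref_n ≥ 0 and E^ref_n be reals, and let e_{ω,k} ≥ 0, e^ns_{ω,k}, e^s_{n,ω,k}, p^th_{g,ω,k}, p^c_{n,ω,k}, p^d_{n,ω,k} be real variables. Define the full-scale objective F := Σ_{ω∈Ω} Σ_{k=0}^{K−1} ( −π_{ω,k}·e_{ω,k} + Σ_{g∈G} C^th_g·p^th_{g,ω,k}·Δ + C^ns·e^ns_{ω,k} + Σ_{n∈N} (C^c_n·p^c_{n,ω,k} + C^d_n·p^d_{n,ω,k})·Δ ) + Σ_{n∈N} Σ_{ω∈Ω} Σ_{k=0}^{K−1} C^ref_n·(e^s_{n,ω,k} − E^ref_n)². Define aggregated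 variables by ē_{ω,r} := (1/|K_r|)·Σ_{k∈K_r} e_{ω,k}, ē^ns_{ω,r} := (1/|K_r|)·Σ_{k∈K_r} e^ns_{ω,k}, ē^s_{n,ω,r} := e^s_{n,ω,min(K_r)}, p̄^th_{g,ω,r} := (1/|K_r|)·Σ_{k∈K_r} p^th_{g,ω,k}, p̄^c_{n,ω,r} := (1/|K_r|)·Σ_{k∈K_r} p^c_{n,ω,k}, p̄^d_{n,ω,r} := (1/|K_r|)·Σ_{k∈K_r} p^d_{n,ω,k}, and the aggregated objective F̄ := Σ_{ω∈Ω} Σ_{r=0}^{R−1} |K_r|·( −(max_{k∈K_r} π_{ω,k})·ē_{ω,r} + Σ_{g∈G} C^th_g·p̄^th_{g,ω,r}·Δ + C^ns·ē^ns_{ω,r} + Σ_{n∈N} (C^c_n·p̄^c_{n,ω,r} + C^d_n·p̄^d_{n,ω,r})·Δ ) + Σ_{n∈N} Σ_{ω∈Ω} Σ_{r=0}^{R−1} C^ref_n·(ē^s_{n,ω,r} − E^ref_n)². Then F̄ ≤ F. -/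
/-!
Split the horizon into the clusters. On each cluster the non-price part of the running cost is
linear in the decision variables, so `|K_r|` times its value at the cluster averages equals its
sum over the cluster, while bounding every price by the cluster maximum can only lower
`-π·e` because `e ≥ 0`. Each storage penalty is nonnegative, so keeping only the one at the first
time step of a cluster lowers that cluster's penalty sum.
-/

/-- The average of `f` over the contiguous cluster `K_r = {t r, ..., t (r+1) - 1}`. -/
noncomputable def clusterAvg (t : ℕ → ℕ) (r : ℕ) (f : ℕ → ℝ) : ℝ :=
  (1 / ((t (r + 1) - t r : ℕ) : ℝ)) * ∑ k ∈ Finset.Ico (t r) (t (r + 1)), f k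

open Finset

theorem Finset.sum_range_eq_sum_sum_Ico {M : Type*} [AddCommMonoid M] {R : ℕ} {t : ℕ → ℕ}
    (ht0 : t 0 = 0) (ht : ∀ r < R, t r ≤ t (r + 1)) (f : ℕ → M) :
    ∑ k ∈ range (t R), f k = ∑ r ∈ range R, ∑ k ∈ Ico (t r) (t (r + 1)), f k := by
  induction R with
  | zero => simp [ht0]
  | succ R ih =>
    rw [sum_range_succ, ← ih fun r hr => ht r (by omega),
      sum_range_add_sum_Ico f (ht R R.lt_succ_self)]

section clusterAvg

variable {t : ℕ → ℕ} {r : ℕ}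

theorem clusterAvg_add (f g : ℕ → ℝ) :
    clusterAvg t r (fun k => f k + g k) = clusterAvg t r f + clusterAvg t r g := by
  simp only [clusterAvg, sum_add_distrib, mul_add]

theorem clusterAvg_const_mul (a : ℝ) (f : ℕ → ℝ) :
    clusterAvg t r (fun k => a * f k) = a * clusterAvg t r f := by
  simp only [clusterAvg, ← mul_sum]
  ring

theorem clusterAvg_mul_const (a : ℝ) (f : ℕ → ℝ) :
    clusterAvg t r (fun k => f k * a) = clusterAvg t r f * a := by
  simp only [clusterAvg, ← sum_mul]
  ring

theorem clusterAvg_sum {ι : Type*} (s : Finset ι) (f : ι → ℕ → ℝ) :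
    clusterAvg t r (fun k => ∑ i ∈ s, f i k) = ∑ i ∈ s, clusterAvg t r (f i) := by
  simp only [clusterAvg, sum_comm (s := Ico _ _), mul_sum]

theorem card_mul_clusterAvg (h : t r < t (r + 1)) (f : ℕ → ℝ) :
    ((t (r + 1) - t r : ℕ) : ℝ) * clusterAvg t r f = ∑ k ∈ Ico (t r) (t (r + 1)), f k := by
  have hcard : ((t (r + 1) - t r : ℕ) : ℝ) ≠ 0 := by exact_mod_cast (Nat.sub_pos_of_lt h).ne'
  rw [clusterAvg, ← mul_assoc, mul_one_div_cancel hcard, one_mul]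

theorem card_mul_aggregated_cost_le_sum_cost (h : t r < t (r + 1)) (price e q : ℕ → ℝ)
    (he : ∀ k ∈ Ico (t r) (t (r + 1)), 0 ≤ e k) :
    ((t (r + 1) - t r : ℕ) : ℝ) *
        (-((Ico (t r) (t (r + 1))).sup' (nonempty_Ico.mpr h) price * clusterAvg t r e)
          + clusterAvg t r q)
      ≤ ∑ k ∈ Ico (t r) (t (r + 1)), (-(price k) * e k + q k) := by
  rw [mul_add, mul_neg, mul_left_comm, card_mul_clusterAvg h, card_mul_clusterAvg h,
    sum_add_distrib, mul_sum, ← sum_neg_distrib]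
  gcongr with k hk
  simp only [neg_mul, neg_le_neg_iff]
  exact mul_le_mul_of_nonneg_right (le_sup' price hk) (he k hk)

end clusterAvg

theorem agg_objective_le_full_objective_general
    {Ω N G : Type*} [Fintype Ω] [Fintype N] [Fintype G]
    (K R : ℕ)
    (t : ℕ → ℕ) (ht0 : t 0 = 0) (htR : t R = K) (hmono : ∀ r < R, t r < t (r + 1))
    (Δ : ℝ)
    (π : Ω → ℕ → ℝ) (Cth : G → ℝ) (Cns : ℝ) (Cc Cd : N → ℝ)
    (Cref : N → ℝ) (hCref : ∀ n, 0 ≤ Cref n) (Eref : N → ℝ)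
    (e ens : Ω → ℕ → ℝ) (es : N → Ω → ℕ → ℝ)
    (pth : G → Ω → ℕ → ℝ) (pc pd : N → Ω → ℕ → ℝ)
    (he : ∀ ω k, k < K → 0 ≤ e ω k) :
    -- F̄ ≤ F
    ((∑ ω : Ω, ∑ r : Fin R,
        ((t (r.1 + 1) - t r.1 : ℕ) : ℝ) *
          (-(((Finset.Ico (t r.1) (t (r.1 + 1))).sup'
                (Finset.nonempty_Ico.mpr (hmono r.1 r.2)) (π ω)) * clusterAvg t r.1 (e ω))
            + (∑ g : G, Cth g * clusterAvg t r.1 (pth g ω) * Δ)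
            + Cns * clusterAvg t r.1 (ens ω)
            + ∑ n : N, (Cc n * clusterAvg t r.1 (pc n ω)
                + Cd n * clusterAvg t r.1 (pd n ω)) * Δ))
      + ∑ n : N, ∑ ω : Ω, ∑ r : Fin R, Cref n * (es n ω (t r.1) - Eref n) ^ 2)
    ≤ ((∑ ω : Ω, ∑ k ∈ Finset.range K,
        (-(π ω k) * e ω k
          + (∑ g : G, Cth g * pth g ω k * Δ)
          + Cns * ens ω k
          + ∑ n : N, (Cc n * pc n ω k + Cd n * pd n ω k) * Δ))
      + ∑ n : N, ∑ ω : Ω, ∑ k ∈ Finset.range K, Cref n * (es n ω k - Eref n) ^ 2) := by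
  have hsplit (f : ℕ → ℝ) :
      ∑ k ∈ range K, f k = ∑ r : Fin R, ∑ k ∈ Ico (t r) (t (r + 1)), f k := by
    rw [← htR, sum_range_eq_sum_sum_Ico ht0 (fun r hr => (hmono r hr).le),
      Fin.sum_univ_eq_sum_range (fun r => ∑ k ∈ Ico (t r) (t (r + 1)), f k)]
  have htmono : MonotoneOn t (Set.Iic R) :=
    monotoneOn_of_le_succ Set.ordConnected_Iic fun r _ _ hr => (hmono r hr).le
  have hcluster {r : Fin R} {k : ℕ} (hk : k ∈ Ico (t r) (t (r + 1))) : k < K :=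
    htR ▸ (mem_Ico.mp hk).2.trans_le
      (htmono (Set.mem_Iic.mpr r.2) (Set.mem_Iic.mpr le_rfl) r.2)
  gcongr with ω _ n _ ω
  · set q : ℕ → ℝ := fun k => (∑ g : G, Cth g * pth g ω k * Δ) + Cns * ens ω k
      + ∑ n : N, (Cc n * pc n ω k + Cd n * pd n ω k) * Δ
    rw [hsplit]
    gcongr with r
    calc _ = ((t (r + 1) - t r : ℕ) : ℝ) *
            (-((Ico (t r) (t (r + 1))).sup' (nonempty_Ico.mpr (hmono r r.2)) (π ω)
              * clusterAvg t r (e ω)) + clusterAvg t r q) := by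
          simp only [q, clusterAvg_add, clusterAvg_sum, clusterAvg_const_mul,
            clusterAvg_mul_const, add_assoc]
      _ ≤ ∑ k ∈ Ico (t r) (t (r + 1)), (-(π ω k) * e ω k + q k) :=
          card_mul_aggregated_cost_le_sum_cost (hmono r r.2) _ _ _
            fun k hk => he ω k (hcluster hk)
      _ = _ := by simp only [q, add_assoc]
  · rw [hsplit]
    gcongr with r
    exact single_le_sum (f := fun k => Cref n * (es n ω k - Eref n) ^ 2)
      (fun k _ => mul_nonneg (hCref n) (sq_nonneg _))
      (left_mem_Ico.mpr (hmono r r.2))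

/-- the aggregated objective `F̄` (cluster-wise maximum prices, cluster
cardinality weights, aggregated variables given by cluster averages, aggregated storage
states given by the state at the first time step `t r` of each cluster) is a lower bound
on the full-scale objective `F`, for any contiguous cluster partition
`K_r = {t r, ..., t (r+1) - 1}`, `r = 0, ..., R-1`, of the horizon `{0, ..., K-1}`. -/
theorem agg_objective_le_full_objective
    {Ω N G : Type*} [Fintype Ω] [Fintype N] [Fintype G]
    [Nonempty Ω] [Nonempty N] [Nonempty G]
    (K R : ℕ) (hK : 1 ≤ K)
    (t : ℕ → ℕ) (ht0 : t 0 = 0) (htR : t R = K) (hmono : ∀ r < R, t r < t (r + 1))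
    (Δ : ℝ) (hΔ : 0 < Δ)
    (π : Ω → ℕ → ℝ) (Cth : G → ℝ) (Cns : ℝ) (Cc Cd : N → ℝ)
    (Cref : N → ℝ) (hCref : ∀ n, 0 ≤ Cref n) (Eref : N → ℝ)
    (e ens : Ω → ℕ → ℝ) (es : N → Ω → ℕ → ℝ)
    (pth : G → Ω → ℕ → ℝ) (pc pd : N → Ω → ℕ → ℝ)
    (he : ∀ ω k, k < K → 0 ≤ e ω k) :
    -- F̄ ≤ F
    ((∑ ω : Ω, ∑ r : Fin R,
        ((t (r.1 + 1) - t r.1 : ℕ) : ℝ) *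
          (-(((Finset.Ico (t r.1) (t (r.1 + 1))).sup'
                (Finset.nonempty_Ico.mpr (hmono r.1 r.2)) (π ω)) * clusterAvg t r.1 (e ω))
            + (∑ g : G, Cth g * clusterAvg t r.1 (pth g ω) * Δ)
            + Cns * clusterAvg t r.1 (ens ω)
            + ∑ n : N, (Cc n * clusterAvg t r.1 (pc n ω)
                + Cd n * clusterAvg t r.1 (pd n ω)) * Δ))
      + ∑ n : N, ∑ ω : Ω, ∑ r : Fin R, Cref n * (es n ω (t r.1) - Eref n) ^ 2)
    ≤ ((∑ ω : Ω, ∑ k ∈ Finset.range K,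
        (-(π ω k) * e ω k
          + (∑ g : G, Cth g * pth g ω k * Δ)
          + Cns * ens ω k
          + ∑ n : N, (Cc n * pc n ω k + Cd n * pd n ω k) * Δ))
      + ∑ n : N, ∑ ω : Ω, ∑ k ∈ Finset.range K, Cref n * (es n ω k - Eref n) ^ 2) :=
  agg_objective_le_full_objective_general K R t ht0 htR hmono Δ π Cth Cns Cc Cd Cref hCref Eref e
    ens es pth pc pd he
end

section
/- (Proposition 1.) Let Ω, N, G be nonempty finite index sets, K ≥ 1, and let {0,...,K−1} be partitioned into R contiguous clusters K_0,...,K_{R−1}. Let Δ > 0, and fix parameters: efficiencies η^c_n, η^d_n, initial states E^{s,0}_n, storage bounds E^s_min,n ≤ E^s_max,n, charging bounds P^c_min,n ≤ P^c_max,n, discharging bounds P^d_min,n ≤ P^d_max,n, thermal bounds 0 ≤ P^th_max,g, emission coefficients α_g ≥ 0, β_g, limits L_g, ramp limits R^th_g ≥ 0, forecasts P^vRES_{ω,k}, D_{ω,k}, with all variables e_{ω,k}, e^ns_{ω,k}, e^s_{n,ω,k}, p^th_{g,ω,k}, p^c_{n,ω,k}, p^d_{n,ω,k} nonnegative. Suppose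 the full-scale constraints hold for all n, g, ω, k: (i) storage dynamics e^s_{n,ω,k+1} = e^s_{n,ω,k} + (η^c_n p^c_{n,ω,k} − η^d_n p^d_{n,ω,k})Δ for k ≤ K−2, with e^s_{n,ω,0} = E^{s,0}_n and E^s_min,n ≤ e^s_{n,ω,k} ≤ E^s_max,n; (ii) P^c_min,n ≤ p^c_{n,ω,k} ≤ P^c_max,n and P^d_min,n ≤ p^d_{n,ω,k} ≤ P^d_max,n; (iii) 0 ≤ p^th_{g,ω,k} ≤ P^th_max,g, α_g (p^th_{g,ω,k})² + β_g p^th_{g,ω,k} ≤ L_g, and |p^th_{g,ω,k+1} − p^th_{g,ω,k}| ≤ R^th_g for k ≤ K−2; (iv) energy balance e_{ω,k} = P^vRES_{ω,k}Δ − D_{ω,k} + Σ_n (p^d_{n,ω,k} − p^c_{n,ω,k})Δ + Σ_g p^th_{g,ω,k}Δ + e^ns_{ω,k}. Define aggregated variables: ē_{ω,r}, ē^ns_{ω,r}, p̄^th_{g,ω,r}, p̄^c_{n,ω,r}, p̄^d_{n,ω,r} as cluster averages over K_r, and ē^s_{n,ω,r} := e^s_{n,ω,min(K_r)}. Then all aggregated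 constraints hold for all n, g, ω, r: (a) ē_{ω,r} = Σ_{k∈K_r}(P^vRES_{ω,k}Δ − D_{ω,k})/|K_r| + Σ_g p̄^th_{g,ω,r}Δ + ē^ns_{ω,r} + Σ_n (p̄^d_{n,ω,r} − p̄^c_{n,ω,r})Δ; (b) ē^s_{n,ω,r+1} = ē^s_{n,ω,r} + |K_r|(η^c_n p̄^c_{n,ω,r} − η^d_n p̄^d_{n,ω,r})Δ for r ≤ R−2, with ē^s_{n,ω,0} = E^{s,0}_n and E^s_min,n ≤ ē^s_{n,ω,r} ≤ E^s_max,n; (c) P^c_min,n ≤ p̄^c_{n,ω,r} ≤ P^c_max,n, P^d_min,n ≤ p̄^d_{n,ω,r} ≤ P^d_max,n, and 0 ≤ p̄^th_{g,ω,r} ≤ P^th_max,g; (d) α_g |K_r| (p̄^th_{g,ω,r})² − α_g(|K_r|−1)(P^th_max,g)² + β_g p̄^th_{g,ω,r} ≤ L_g; (e) p̄^th_{g,ω,r+1} − p̄^th_{g,ω,r}|K_r| ≤ R^th_g + R^th_g(|K_{r+1}|−1)/2 and p̄^th_{g,ω,r} − p̄^th_{g,ω,r+1}|K_{r+1}| ≤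 R^th_g + R^th_g(|K_r|−1)/2 for r ≤ R−2; and all aggregated variables are nonnegative. Moreover, for any real cost coefficients C^th_g, C^ns, C^c_n, C^d_n and C^ref_n ≥ 0, E^ref_n, and prices π_{ω,k}, the aggregated objective value F̄ evaluated at these aggregated variables (with cluster-wise maximum prices and cluster weights |K_r|) satisfies F̄ ≤ F, where F is the full-scale objective value at the original variables. -/
/-- Decision variables of the VPP dispatch model (full-scale: indexed by time steps `k`;
temporally aggregated: indexed by clusters `r`). -/
structure DispatchVars (Ω N G : Type*) where
  /-- energy output of the VPP -/
  e : Ω → ℕ → ℝ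
  /-- non-supplied energy -/
  ens : Ω → ℕ → ℝ
  /-- storage state of charge -/
  es : N → Ω → ℕ → ℝ
  /-- thermal power output -/
  pth : G → Ω → ℕ → ℝ
  /-- storage charging power -/
  pc : N → Ω → ℕ → ℝ
  /-- storage discharging power -/
  pd : N → Ω → ℕ → ℝ

/-- Parameters of the VPP dispatch model. -/
structure VPPParams (Ω N G : Type*) where
  /-- sampling time -/
  Δ : ℝ
  /-- charging / discharging efficiencies -/
  (ηc ηd : N → ℝ)
  /-- initial storage states -/
  Es0 : N → ℝ
  /-- storage state bounds -/
  (Esmin Esmax : N → ℝ)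
  /-- charging power bounds -/
  (Pcmin Pcmax : N → ℝ)
  /-- discharging power bounds -/
  (Pdmin Pdmax : N → ℝ)
  /-- thermal capacity -/
  Pthmax : G → ℝ
  /-- emission coefficients and limits -/
  (αg βg Lg : G → ℝ)
  /-- ramp limits -/
  Rth : G → ℝ
  /-- vRES forecast and demand forecast -/
  (Pv D : Ω → ℕ → ℝ)
  /-- energy prices -/
  π : Ω → ℕ → ℝ
  /-- thermal generation cost -/
  Cth : G → ℝ
  /-- non-supplied energy penalty -/
  Cns : ℝ
  /-- storage charging / discharging costs -/
  (Cc Cd : N → ℝ)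
  /-- storage reference-deviation penalty and reference states -/
  (Cref Eref : N → ℝ)

/-- Feasibility for the full-scale stochastic dispatch model over the horizon
`{0, ..., K-1}`: storage dynamics, initial state, state-of-charge bounds,
charging/discharging bounds, thermal bounds, quadratic emission constraints,
ramp constraints, energy balance, and nonnegativity of all variables. -/
def FSFeasible {Ω N G : Type*} [Fintype N] [Fintype G]
    (P : VPPParams Ω N G) (K : ℕ) (z : DispatchVars Ω N G) : Prop :=
  (∀ n ω k, k + 2 ≤ K →
      z.es n ω (k + 1) = z.es n ω k + (P.ηc n * z.pc n ω k - P.ηd n * z.pd n ω k) * P.Δ) ∧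
  (∀ n ω, z.es n ω 0 = P.Es0 n) ∧
  (∀ n ω k, k < K → P.Esmin n ≤ z.es n ω k ∧ z.es n ω k ≤ P.Esmax n) ∧
  (∀ n ω k, k < K → P.Pcmin n ≤ z.pc n ω k ∧ z.pc n ω k ≤ P.Pcmax n) ∧
  (∀ n ω k, k < K → P.Pdmin n ≤ z.pd n ω k ∧ z.pd n ω k ≤ P.Pdmax n) ∧
  (∀ g ω k, k < K → 0 ≤ z.pth g ω k ∧ z.pth g ω k ≤ P.Pthmax g) ∧
  (∀ g ω k, k < K → P.αg g * z.pth g ω k ^ 2 + P.βg g * z.pth g ω k ≤ P.Lg g) ∧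
  (∀ g ω k, k + 2 ≤ K → |z.pth g ω (k + 1) - z.pth g ω k| ≤ P.Rth g) ∧
  (∀ ω k, k < K →
      z.e ω k = P.Pv ω k * P.Δ - P.D ω k
        + (∑ n : N, (z.pd n ω k - z.pc n ω k)) * P.Δ
        + (∑ g : G, z.pth g ω k) * P.Δ + z.ens ω k) ∧
  (∀ ω k, k < K → 0 ≤ z.e ω k ∧ 0 ≤ z.ens ω k) ∧
  (∀ n ω k, k < K → 0 ≤ z.es n ω k ∧ 0 ≤ z.pc n ω k ∧ 0 ≤ z.pd n ω k)

/-- Full-scale objective `F`: negated revenue, thermal generation costs, non-supplied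
energy penalty, storage charging/discharging costs, and quadratic storage-reference
penalties, summed over scenarios and time steps. -/
noncomputable def FSObj {Ω N G : Type*} [Fintype Ω] [Fintype N] [Fintype G]
    (P : VPPParams Ω N G) (K : ℕ) (z : DispatchVars Ω N G) : ℝ :=
  (∑ ω : Ω, ∑ k ∈ Finset.range K,
      (-(P.π ω k) * z.e ω k
        + (∑ g : G, P.Cth g * z.pth g ω k * P.Δ)
        + P.Cns * z.ens ω k
        + ∑ n : N, (P.Cc n * z.pc n ω k + P.Cd n * z.pd n ω k) * P.Δ))
    + ∑ n : N, ∑ ω : Ω, ∑ k ∈ Finset.range K, P.Cref n * (z.es n ω k - P.Eref n) ^ 2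

/-- Cardinality `|K_r| = t (r+1) - t r` (as a real number) of the contiguous cluster
`K_r = {t r, ..., t (r+1) - 1}`. -/
def clusterCard (t : ℕ → ℕ) (r : ℕ) : ℝ := ((t (r + 1) - t r : ℕ) : ℝ)

/-- Feasibility for the temporally aggregated dispatch model over a contiguous cluster
partition `K_r = {t r, ..., t (r+1) - 1}`, `r = 0, ..., R-1`, of the horizon:
aggregated balance, aggregated storage dynamics with cluster cardinality multipliers,
aggregated bounds, aggregated emission constraints with compensation term
`α_g*(|K_r|-1)*(P^th_max)²`, aggregated ramp constraints with compensation terms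
`R^th_g*(|K_r|-1)/2`, and nonnegativity. -/
def AggFeasible {Ω N G : Type*} [Fintype N] [Fintype G]
    (P : VPPParams Ω N G) (R : ℕ) (t : ℕ → ℕ) (z : DispatchVars Ω N G) : Prop :=
  (∀ ω r, r < R →
      z.e ω r = (∑ k ∈ Finset.Ico (t r) (t (r + 1)), (P.Pv ω k * P.Δ - P.D ω k))
          / clusterCard t r
        + (∑ g : G, z.pth g ω r) * P.Δ + z.ens ω r
        + (∑ n : N, (z.pd n ω r - z.pc n ω r)) * P.Δ) ∧
  (∀ n ω r, r + 2 ≤ R →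
      z.es n ω (r + 1) = z.es n ω r
        + clusterCard t r * (P.ηc n * z.pc n ω r - P.ηd n * z.pd n ω r) * P.Δ) ∧
  (∀ n ω, z.es n ω 0 = P.Es0 n) ∧
  (∀ n ω r, r < R → P.Esmin n ≤ z.es n ω r ∧ z.es n ω r ≤ P.Esmax n) ∧
  (∀ n ω r, r < R → P.Pcmin n ≤ z.pc n ω r ∧ z.pc n ω r ≤ P.Pcmax n) ∧
  (∀ n ω r, r < R → P.Pdmin n ≤ z.pd n ω r ∧ z.pd n ω r ≤ P.Pdmax n) ∧
  (∀ g ω r, r < R → 0 ≤ z.pth g ω r ∧ z.pth g ω r ≤ P.Pthmax g) ∧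
  (∀ g ω r, r < R →
      P.αg g * clusterCard t r * z.pth g ω r ^ 2
        - P.αg g * (clusterCard t r - 1) * P.Pthmax g ^ 2
        + P.βg g * z.pth g ω r ≤ P.Lg g) ∧
  (∀ g ω r, r + 2 ≤ R →
      z.pth g ω (r + 1) - z.pth g ω r * clusterCard t r
          ≤ P.Rth g + P.Rth g * (clusterCard t (r + 1) - 1) / 2 ∧
      z.pth g ω r - z.pth g ω (r + 1) * clusterCard t (r + 1)
          ≤ P.Rth g + P.Rth g * (clusterCard t r - 1) / 2) ∧
  (∀ ω r, r < R → 0 ≤ z.e ω r ∧ 0 ≤ z.ens ω r) ∧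
  (∀ n ω r, r < R → 0 ≤ z.es n ω r ∧ 0 ≤ z.pc n ω r ∧ 0 ≤ z.pd n ω r)

/-- Aggregated objective `F̄`: same cost structure as `F`, with cluster-wise maximum
prices and cluster cardinality weights. -/
noncomputable def AggObj {Ω N G : Type*} [Fintype Ω] [Fintype N] [Fintype G]
    (P : VPPParams Ω N G) (R : ℕ) (t : ℕ → ℕ) (hmono : ∀ r < R, t r < t (r + 1))
    (z : DispatchVars Ω N G) : ℝ :=
  (∑ ω : Ω, ∑ r : Fin R,
      clusterCard t r.1 *
        (-(((Finset.Ico (t r.1) (t (r.1 + 1))).sup'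
              (Finset.nonempty_Ico.mpr (hmono r.1 r.2)) (P.π ω)) * z.e ω r.1)
          + (∑ g : G, P.Cth g * z.pth g ω r.1 * P.Δ)
          + P.Cns * z.ens ω r.1
          + ∑ n : N, (P.Cc n * z.pc n ω r.1 + P.Cd n * z.pd n ω r.1) * P.Δ))
    + ∑ n : N, ∑ ω : Ω, ∑ r : Fin R, P.Cref n * (z.es n ω r.1 - P.Eref n) ^ 2

/-- The aggregation map: all aggregated variables are cluster averages, except the
aggregated storage states, which are the states at the first time step `t r` of each
cluster. -/
noncomputable def aggregate {Ω N G : Type*} (t : ℕ → ℕ) (z : DispatchVars Ω N G) :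
    DispatchVars Ω N G where
  e := fun ω r => (1 / clusterCard t r) * ∑ k ∈ Finset.Ico (t r) (t (r + 1)), z.e ω k
  ens := fun ω r => (1 / clusterCard t r) * ∑ k ∈ Finset.Ico (t r) (t (r + 1)), z.ens ω k
  es := fun n ω r => z.es n ω (t r)
  pth := fun g ω r => (1 / clusterCard t r) * ∑ k ∈ Finset.Ico (t r) (t (r + 1)), z.pth g ω k
  pc := fun n ω r => (1 / clusterCard t r) * ∑ k ∈ Finset.Ico (t r) (t (r + 1)), z.pc n ω k
  pd := fun n ω r => (1 / clusterCard t r) * ∑ k ∈ Finset.Ico (t r) (t (r + 1)), z.pd n ω k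

/-! Averaging over a cluster is linear, so the energy balance and the storage dynamics pass to
cluster averages (the storage state telescopes across a cluster), and averages respect box
constraints. The emission constraint survives by Jensen's inequality for the convex quadratic;
the compensation term only helps, because the average output stays below `P^th_max`. For the
ramp constraints, the output at the `i`-th step of a cluster is within `i * R^th` of the adjacent
step of the neighbouring cluster, so the cluster average is within `R^th (|K_r| + 1) / 2` of it,
and by nonnegativity that single value is dominated by the neighbouring cluster's total. In the
objective, the cluster-maximum price can only lower the negated revenue because energy outputs
are nonnegative, and keeping only the first storage state of each cluster drops nonnegative
penalties. -/

open Finset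
open scoped BigOperators

theorem sum_range_sum_Ico_eq_sum_range {M : Type*} [AddCommGroup M] (f : ℕ → M) {t : ℕ → ℕ}
    {R : ℕ} (ht0 : t 0 = 0) (ht : ∀ r < R, t r ≤ t (r + 1)) :
    ∑ r ∈ range R, ∑ k ∈ Ico (t r) (t (r + 1)), f k = ∑ k ∈ range (t R), f k := by
  rw [sum_congr rfl fun r hr => sum_Ico_eq_sub f (ht r (mem_range.1 hr)),
    sum_range_sub (fun r => ∑ k ∈ range (t r), f k), ht0, range_zero, sum_empty, sub_zero]

theorem sum_fin_le_sum_range_of_le_sum_Ico {t : ℕ → ℕ} {R : ℕ} (ht0 : t 0 = 0)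
    (ht : ∀ r < R, t r ≤ t (r + 1)) {g : Fin R → ℝ} {f : ℕ → ℝ}
    (h : ∀ r : Fin R, g r ≤ ∑ k ∈ Ico (t r) (t (r + 1)), f k) :
    ∑ r : Fin R, g r ≤ ∑ k ∈ range (t R), f k := by
  rw [← sum_range_sum_Ico_eq_sum_range f ht0 ht,
    ← Fin.sum_univ_eq_sum_range (fun r => ∑ k ∈ Ico (t r) (t (r + 1)), f k)]
  exact sum_le_sum fun r _ => h r

theorem abs_sub_le_mul_of_abs_succ_sub_le {x : ℕ → ℝ} {L : ℝ} {K : ℕ}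
    (hx : ∀ k, k + 2 ≤ K → |x (k + 1) - x k| ≤ L) (a : ℕ) :
    ∀ d : ℕ, a + d < K → |x (a + d) - x a| ≤ d * L
  | 0, _ => by simp
  | d + 1, h =>
    calc |x (a + (d + 1)) - x a| ≤ |x (a + d + 1) - x (a + d)| + |x (a + d) - x a| :=
          abs_sub_le _ _ _
      _ ≤ L + d * L :=
          add_le_add (hx _ (by omega)) (abs_sub_le_mul_of_abs_succ_sub_le hx a d (by omega))
      _ = (d + 1 : ℕ) * L := by push_cast; ring

theorem sum_range_le_of_le_add_succ_mul {y : ℕ → ℝ} {x₀ L : ℝ} {n : ℕ}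
    (h : ∀ i < n, y i ≤ x₀ + (i + 1) * L) :
    ∑ i ∈ range n, y i ≤ n * x₀ + n * (n + 1) / 2 * L := by
  induction n with
  | zero => simp
  | succ n ih =>
    have hn := h n n.lt_succ_self
    rw [sum_range_succ]
    push_cast
    linarith [ih fun i hi => h i (by omega)]

theorem quadratic_expect_le {ι : Type*} {s : Finset ι} (hs : s.Nonempty) {f : ι → ℝ}
    {α β L : ℝ} (hα : 0 ≤ α) (h : ∀ i ∈ s, α * f i ^ 2 + β * f i ≤ L) :
    α * (𝔼 i ∈ s, f i) ^ 2 + β * 𝔼 i ∈ s, f i ≤ L := by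
  have hsq : (𝔼 i ∈ s, f i) ^ 2 ≤ 𝔼 i ∈ s, f i ^ 2 := by
    simpa [hs] using expect_mul_sq_le_sq_mul_sq s f 1
  calc α * (𝔼 i ∈ s, f i) ^ 2 + β * 𝔼 i ∈ s, f i
      ≤ α * 𝔼 i ∈ s, f i ^ 2 + β * 𝔼 i ∈ s, f i := by gcongr
    _ = 𝔼 i ∈ s, (α * f i ^ 2 + β * f i) := by
      rw [expect_add_distrib, mul_expect, mul_expect]
    _ ≤ L := expect_le hs h

theorem eq_add_sum_Ico_of_succ_eq {x d : ℕ → ℝ} {a b : ℕ} (hab : a ≤ b)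
    (h : ∀ k ∈ Ico a b, x (k + 1) = x k + d k) : x b = x a + ∑ k ∈ Ico a b, d k := by
  have htel := sum_Ico_sub x hab
  rw [sum_congr rfl fun k hk => sub_eq_of_eq_add' (h k hk)] at htel
  linarith

theorem mul_card_mul_sq_expect_sub_le {ι : Type*} {s : Finset ι} (hs : s.Nonempty) {f : ι → ℝ}
    {α β L M : ℝ} (hα : 0 ≤ α) (h₀ : ∀ i ∈ s, 0 ≤ f i) (hM : ∀ i ∈ s, f i ≤ M)
    (h : ∀ i ∈ s, α * f i ^ 2 + β * f i ≤ L) :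
    α * #s * (𝔼 i ∈ s, f i) ^ 2 - α * (#s - 1) * M ^ 2 + β * 𝔼 i ∈ s, f i ≤ L := by
  have hcard : (1 : ℝ) ≤ #s := by exact_mod_cast hs.card_pos
  have hsq : (𝔼 i ∈ s, f i) ^ 2 ≤ M ^ 2 :=
    pow_le_pow_left₀ (expect_nonneg h₀) (expect_le hs hM) 2
  linarith [quadratic_expect_le hs hα h,
    mul_nonneg (mul_nonneg hα (sub_nonneg.2 hcard)) (sub_nonneg.2 hsq)]

section Ramp

variable {x : ℕ → ℝ} {L : ℝ} {K : ℕ}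

theorem expect_Ico_le_pred_add_of_ramp (hx : ∀ k, k + 2 ≤ K → |x (k + 1) - x k| ≤ L)
    {b c : ℕ} (hb : 0 < b) (hbc : b < c) (hcK : c ≤ K) :
    𝔼 j ∈ Ico b c, x j ≤ x (b - 1) + ((c - b : ℕ) + 1) / 2 * L := by
  have hn : (0 : ℝ) < (c - b : ℕ) := by exact_mod_cast Nat.sub_pos_of_lt hbc
  have hsum := sum_range_le_of_le_add_succ_mul (y := fun i => x (b + i)) (x₀ := x (b - 1))
    (L := L) (n := c - b) fun i hi => by
      have h := abs_sub_le_mul_of_abs_succ_sub_le hx (b - 1) (i + 1) (by omega)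
      rw [show b - 1 + (i + 1) = b + i by omega] at h
      push_cast at h
      linarith [le_abs_self (x (b + i) - x (b - 1))]
  rw [expect_eq_sum_div_card, Nat.card_Ico, div_le_iff₀ hn, sum_Ico_eq_sum_range]
  linarith

theorem expect_Ico_le_top_add_of_ramp (hx : ∀ k, k + 2 ≤ K → |x (k + 1) - x k| ≤ L)
    {a b : ℕ} (hab : a < b) (hbK : b < K) :
    𝔼 j ∈ Ico a b, x j ≤ x b + ((b - a : ℕ) + 1) / 2 * L := by
  have hn : (0 : ℝ) < (b - a : ℕ) := by exact_mod_cast Nat.sub_pos_of_lt hab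
  have hsum := sum_range_le_of_le_add_succ_mul (y := fun i => x (a + (b - a - 1 - i)))
    (x₀ := x b) (L := L) (n := b - a) fun i hi => by
      have h := abs_sub_le_mul_of_abs_succ_sub_le hx (a + (b - a - 1 - i)) (i + 1) (by omega)
      rw [show a + (b - a - 1 - i) + (i + 1) = b by omega] at h
      push_cast at h
      linarith [neg_abs_le (x b - x (a + (b - a - 1 - i)))]
  rw [expect_eq_sum_div_card, Nat.card_Ico, div_le_iff₀ hn, sum_Ico_eq_sum_range,
    ← sum_range_reflect]
  linarith

theorem expect_Ico_right_sub_sum_Ico_left_le (hx₀ : ∀ k < K, 0 ≤ x k)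
    (hx : ∀ k, k + 2 ≤ K → |x (k + 1) - x k| ≤ L) {a b c : ℕ} (hab : a < b) (hbc : b < c)
    (hcK : c ≤ K) :
    𝔼 j ∈ Ico b c, x j - ∑ j ∈ Ico a b, x j ≤ L + L * ((c - b : ℕ) - 1) / 2 := by
  have hlast : x (b - 1) ≤ ∑ j ∈ Ico a b, x j :=
    single_le_sum (fun j hj => hx₀ j (by simp at hj; omega)) (by simp; omega)
  linarith [expect_Ico_le_pred_add_of_ramp hx (by omega) hbc hcK]

theorem expect_Ico_left_sub_sum_Ico_right_le (hx₀ : ∀ k < K, 0 ≤ x k)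
    (hx : ∀ k, k + 2 ≤ K → |x (k + 1) - x k| ≤ L) {a b c : ℕ} (hab : a < b) (hbc : b < c)
    (hcK : c ≤ K) :
    𝔼 j ∈ Ico a b, x j - ∑ j ∈ Ico b c, x j ≤ L + L * ((b - a : ℕ) - 1) / 2 := by
  have hfirst : x b ≤ ∑ j ∈ Ico b c, x j :=
    single_le_sum (fun j hj => hx₀ j (by simp at hj; omega)) (by simp; omega)
  linarith [expect_Ico_le_top_add_of_ramp hx hab (by omega : b < K)]

end Ramp

theorem clusterCard_eq_card (t : ℕ → ℕ) (r : ℕ) :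
    clusterCard t r = #(Ico (t r) (t (r + 1))) := by
  rw [clusterCard, Nat.card_Ico]

theorem one_div_clusterCard_mul_sum (t : ℕ → ℕ) (r : ℕ) (f : ℕ → ℝ) :
    1 / clusterCard t r * ∑ k ∈ Ico (t r) (t (r + 1)), f k = 𝔼 k ∈ Ico (t r) (t (r + 1)), f k := by
  rw [expect_eq_sum_div_card, clusterCard_eq_card, one_div_mul_eq_div]

theorem expect_mul_clusterCard (t : ℕ → ℕ) (r : ℕ) (f : ℕ → ℝ) :
    (𝔼 k ∈ Ico (t r) (t (r + 1)), f k) * clusterCard t r = ∑ k ∈ Ico (t r) (t (r + 1)), f k := by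
  rw [clusterCard_eq_card, mul_comm, card_mul_expect]

section Partition

variable {t : ℕ → ℕ} {K R : ℕ} (htR : t R = K) (hmono : ∀ r < R, t r < t (r + 1))
include htR hmono

theorem apply_le_horizon {r : ℕ} (hr : r ≤ R) : t r ≤ K :=
  htR ▸ (strictMonoOn_Iic_of_lt_succ fun m hm => by simpa using hmono m hm).monotoneOn
    (Set.mem_Iic.2 hr) (Set.mem_Iic.2 le_rfl) hr

theorem lt_horizon_of_mem_Ico {r k : ℕ} (hr : r < R) (hk : k ∈ Ico (t r) (t (r + 1))) : k < K := by
  have : t (r + 1) ≤ K := apply_le_horizon htR hmono hr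
  simp only [mem_Ico] at hk
  omega

end Partition

theorem aggFeasible_aggregate {Ω N G : Type*} [Fintype N] [Fintype G] {P : VPPParams Ω N G}
    {K R : ℕ} {t : ℕ → ℕ} (ht0 : t 0 = 0) (htR : t R = K) (hmono : ∀ r < R, t r < t (r + 1))
    (hα : ∀ g, 0 ≤ P.αg g) {z : DispatchVars Ω N G} (hz : FSFeasible P K z) :
    AggFeasible P R t (aggregate t z) := by
  obtain ⟨hdyn, hes0, hesb, hpcb, hpdb, hpthb, hemis, hramp, hbal, hnn₁, hnn₂⟩ := hz
  have hmem {r k : ℕ} (hr : r < R) (hk : k ∈ Ico (t r) (t (r + 1))) : k < K :=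
    lt_horizon_of_mem_Ico htR hmono hr hk
  have hne {r : ℕ} (hr : r < R) : (Ico (t r) (t (r + 1))).Nonempty := nonempty_Ico.2 (hmono r hr)
  have hstart {r : ℕ} (hr : r < R) : t r < K := hmem hr (left_mem_Ico.2 (hmono r hr))
  simp only [AggFeasible, aggregate, one_div_clusterCard_mul_sum]
  refine ⟨?balance, ?dynamics, ?init, ?es, ?pc, ?pd, ?pth, ?emission, ?ramp, ?nn₁, ?nn₂⟩
  case balance =>
    intro ω r hr
    rw [expect_congr rfl fun k hk => hbal ω k (hmem hr hk), ← one_div_mul_eq_div,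
      one_div_clusterCard_mul_sum]
    simp only [expect_add_distrib, expect_sub_distrib, ← expect_mul, expect_sum_comm]
    ring
  case dynamics =>
    intro n ω r hr
    have hend : t (r + 1 + 1) ≤ K := apply_le_horizon htR hmono hr
    have hnext := hmono (r + 1) hr
    rw [eq_add_sum_Ico_of_succ_eq (hmono r (by omega)).le fun k hk =>
      hdyn n ω k (by simp only [mem_Ico] at hk; omega), ← expect_mul_clusterCard, ← expect_mul,
      expect_sub_distrib, ← mul_expect, ← mul_expect]
    ring
  case init =>
    intro n ω
    rw [ht0]
    exact hes0 n ω
  case es => exact fun n ω r hr => hesb n ω _ (hstart hr)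
  case pc =>
    exact fun n ω r hr => ⟨le_expect (hne hr) fun k hk => (hpcb n ω k (hmem hr hk)).1,
      expect_le (hne hr) fun k hk => (hpcb n ω k (hmem hr hk)).2⟩
  case pd =>
    exact fun n ω r hr => ⟨le_expect (hne hr) fun k hk => (hpdb n ω k (hmem hr hk)).1,
      expect_le (hne hr) fun k hk => (hpdb n ω k (hmem hr hk)).2⟩
  case pth =>
    exact fun g ω r hr => ⟨le_expect (hne hr) fun k hk => (hpthb g ω k (hmem hr hk)).1,
      expect_le (hne hr) fun k hk => (hpthb g ω k (hmem hr hk)).2⟩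
  case emission =>
    intro g ω r hr
    rw [clusterCard_eq_card]
    exact mul_card_mul_sq_expect_sub_le (hne hr) (hα g)
      (fun k hk => (hpthb g ω k (hmem hr hk)).1) (fun k hk => (hpthb g ω k (hmem hr hk)).2)
      fun k hk => hemis g ω k (hmem hr hk)
  case ramp =>
    intro g ω r hr
    have hx₀ (k : ℕ) (hk : k < K) : 0 ≤ z.pth g ω k := (hpthb g ω k hk).1
    rw [expect_mul_clusterCard, expect_mul_clusterCard]
    exact ⟨expect_Ico_right_sub_sum_Ico_left_le hx₀ (hramp g ω) (hmono r (by omega))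
        (hmono (r + 1) hr) (apply_le_horizon htR hmono hr),
      expect_Ico_left_sub_sum_Ico_right_le hx₀ (hramp g ω) (hmono r (by omega))
        (hmono (r + 1) hr) (apply_le_horizon htR hmono hr)⟩
  case nn₁ =>
    exact fun ω r hr => ⟨expect_nonneg fun k hk => (hnn₁ ω k (hmem hr hk)).1,
      expect_nonneg fun k hk => (hnn₁ ω k (hmem hr hk)).2⟩
  case nn₂ =>
    exact fun n ω r hr => ⟨(hnn₂ n ω _ (hstart hr)).1,
      expect_nonneg fun k hk => (hnn₂ n ω k (hmem hr hk)).2.1,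
      expect_nonneg fun k hk => (hnn₂ n ω k (hmem hr hk)).2.2⟩

def stageCost {Ω N G : Type*} [Fintype N] [Fintype G] (P : VPPParams Ω N G) (p : ℝ)
    (z : DispatchVars Ω N G) (ω : Ω) (k : ℕ) : ℝ :=
  -(p * z.e ω k) + (∑ g : G, P.Cth g * z.pth g ω k * P.Δ) + P.Cns * z.ens ω k
    + ∑ n : N, (P.Cc n * z.pc n ω k + P.Cd n * z.pd n ω k) * P.Δ

section StageCost

variable {Ω N G : Type*} [Fintype N] [Fintype G] (P : VPPParams Ω N G)

theorem clusterCard_mul_stageCost_aggregate (p : ℝ) (t : ℕ → ℕ) (z : DispatchVars Ω N G)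
    (ω : Ω) (r : ℕ) :
    clusterCard t r * stageCost P p (aggregate t z) ω r
      = ∑ k ∈ Ico (t r) (t (r + 1)), stageCost P p z ω k := by
  rw [← card_mul_expect (Ico (t r) (t (r + 1))), ← clusterCard_eq_card]
  simp only [stageCost, aggregate, one_div_clusterCard_mul_sum, expect_add_distrib,
    expect_neg_distrib, ← mul_expect, ← expect_mul, expect_sum_comm]

theorem stageCost_le_of_le {p q : ℝ} (hpq : p ≤ q) {z : DispatchVars Ω N G} {ω : Ω} {k : ℕ}
    (he : 0 ≤ z.e ω k) : stageCost P q z ω k ≤ stageCost P p z ω k := by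
  unfold stageCost
  linarith [mul_le_mul_of_nonneg_right hpq he]

end StageCost

theorem aggObj_aggregate_le {Ω N G : Type*} [Fintype Ω] [Fintype N] [Fintype G]
    {P : VPPParams Ω N G} {K R : ℕ} {t : ℕ → ℕ} (ht0 : t 0 = 0) (htR : t R = K)
    (hmono : ∀ r < R, t r < t (r + 1)) (hCref : ∀ n, 0 ≤ P.Cref n) {z : DispatchVars Ω N G}
    (hz : FSFeasible P K z) :
    AggObj P R t hmono (aggregate t z) ≤ FSObj P K z := by
  obtain ⟨-, -, -, -, -, -, -, -, -, hnn, -⟩ := hz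
  have he (ω : Ω) (r : Fin R) (k : ℕ) (hk : k ∈ Ico (t r) (t (r + 1))) : 0 ≤ z.e ω k :=
    (hnn ω k (lt_horizon_of_mem_Ico htR hmono r.2 hk)).1
  have hmono' (r : ℕ) (hr : r < R) : t r ≤ t (r + 1) := (hmono r hr).le
  rw [AggObj, FSObj, ← htR]
  gcongr with ω _ n _ ω _
  · refine sum_fin_le_sum_range_of_le_sum_Ico ht0 hmono' fun r => ?_
    calc _ = ∑ k ∈ Ico (t r) (t (r + 1)),
          stageCost P ((Ico (t r) (t (r + 1))).sup' (nonempty_Ico.2 (hmono r r.2)) (P.π ω)) z ω k :=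
        clusterCard_mul_stageCost_aggregate P _ t z ω r
      _ ≤ ∑ k ∈ Ico (t r) (t (r + 1)), stageCost P (P.π ω k) z ω k :=
        sum_le_sum fun k hk => stageCost_le_of_le P (le_sup' _ hk) (he ω r k hk)
      -- `FSObj` writes the revenue term as `-π * e`, `AggObj` as `-(π * e)`.
      _ = _ := by simp only [stageCost, neg_mul]
  · exact sum_fin_le_sum_range_of_le_sum_Ico ht0 hmono' fun r =>
      single_le_sum (f := fun k => P.Cref n * (z.es n ω k - P.Eref n) ^ 2)
        (fun k _ => mul_nonneg (hCref n) (sq_nonneg _)) (left_mem_Ico.2 (hmono r r.2))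

theorem proposition1_general
    {Ω N G : Type*} [Fintype Ω] [Fintype N] [Fintype G]
    (P : VPPParams Ω N G) (K R : ℕ)
    (t : ℕ → ℕ) (ht0 : t 0 = 0) (htR : t R = K) (hmono : ∀ r < R, t r < t (r + 1))
    (hα : ∀ g, 0 ≤ P.αg g)
    (hCref : ∀ n, 0 ≤ P.Cref n)
    (z : DispatchVars Ω N G) (hz : FSFeasible P K z) :
    AggFeasible P R t (aggregate t z) ∧
      AggObj P R t hmono (aggregate t z) ≤ FSObj P K z :=
  ⟨aggFeasible_aggregate ht0 htR hmono hα hz, aggObj_aggregate_le ht0 htR hmono hCref hz⟩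

/-- Proposition 1: any feasible solution of the full-scale stochastic
dispatch model maps, via cluster averaging (and evaluation at the first time step of each
cluster for the storage states), to a feasible solution of the temporally aggregated model
with an equal or lower objective value. -/
theorem proposition1
    {Ω N G : Type*} [Fintype Ω] [Fintype N] [Fintype G]
    [Nonempty Ω] [Nonempty N] [Nonempty G]
    (P : VPPParams Ω N G) (K R : ℕ) (hK : 1 ≤ K)
    (t : ℕ → ℕ) (ht0 : t 0 = 0) (htR : t R = K) (hmono : ∀ r < R, t r < t (r + 1))
    (hΔ : 0 < P.Δ)
    (hEs : ∀ n, P.Esmin n ≤ P.Esmax n)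
    (hPc : ∀ n, P.Pcmin n ≤ P.Pcmax n)
    (hPd : ∀ n, P.Pdmin n ≤ P.Pdmax n)
    (hPth : ∀ g, 0 ≤ P.Pthmax g)
    (hα : ∀ g, 0 ≤ P.αg g)
    (hRth : ∀ g, 0 ≤ P.Rth g)
    (hCref : ∀ n, 0 ≤ P.Cref n)
    (z : DispatchVars Ω N G) (hz : FSFeasible P K z) :
    AggFeasible P R t (aggregate t z) ∧
      AggObj P R t hmono (aggregate t z) ≤ FSObj P K z :=
  proposition1_general P K R t ht0 htR hmono hα hCref z hz
end
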